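/- Let $S = K[x_1,\ldots,x_n]$ with $n \ge 1$ and let $I \subset S$ be an $\mathfrak{m}$-primary stable monomial ideal, where $\mathfrak{m} = (x_1,\ldots,x_n)$. If some linear form $l \in S_1$ is a weak Lefschetz element on $S/I$ (i.e., multiplication by $l$ from $(S/I)_j$ to $(S/I)_{j+1}$ has maximal rank for all $j$), then $x_n$ is a weak Lefschetz element on $S/I$. -/

import Mathlib

/-!
If `x_n F ∈ I`, stability applied at the largest variable `x_n` gives `x_i F ∈ I` for every `i`,
hence `l F ∈ I` for every linear form `l`. So on `(S/I)_j` the kernel of multiplication by `x_n`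
lies in the kernel of multiplication by `l`: injectivity of `l` passes to `x_n` directly, and
surjectivity by rank–nullity.
-/

open MvPolynomial

variable {K : Type*} [Field K] {n : ℕ}

/-- The total degree of an exponent vector. -/
def mdeg {n : ℕ} (m : Fin n →₀ ℕ) : ℕ := m.sum fun _ e => e

/-- `I` is a monomial ideal: it contains every monomial of each of its elements. -/
def IsMonomialIdeal (I : Ideal (MvPolynomial (Fin n) K)) : Prop :=
  ∀ f ∈ I, ∀ m ∈ f.support, (monomial m (1 : K)) ∈ I

/-- `I` is stable: for every monomial `u ∈ I` with largest dividing variable `x_k`,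
and every `i ≤ k`, the monomial `(x_i / x_k) * u` lies in `I`. -/
def IsStableIdeal (I : Ideal (MvPolynomial (Fin n) K)) : Prop :=
  ∀ m : Fin n →₀ ℕ, (monomial m (1 : K)) ∈ I →
    ∀ k i : Fin n, m k ≠ 0 → (∀ k', k < k' → m k' = 0) → i ≤ k →
      (monomial (m + Finsupp.single i 1 - Finsupp.single k 1) (1 : K)) ∈ I

/-- `I` is strongly stable: for every monomial `u ∈ I`, every variable `x_k` dividing `u`
and every `i ≤ k`, the monomial `(x_i / x_k) * u` lies in `I`. -/
def IsStronglyStableIdeal (I : Ideal (MvPolynomial (Fin n) K)) : Prop :=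
  ∀ m : Fin n →₀ ℕ, (monomial m (1 : K)) ∈ I →
    ∀ k i : Fin n, m k ≠ 0 → i ≤ k →
      (monomial (m + Finsupp.single i 1 - Finsupp.single k 1) (1 : K)) ∈ I

/-- `v <_lex u` for exponent vectors, lex order with `x_1 > x_2 > ⋯ > x_n`. -/
def lexLt {n : ℕ} (v u : Fin n →₀ ℕ) : Prop :=
  ∃ i : Fin n, (∀ j < i, v j = u j) ∧ v i < u i

/-- `I` is a lexsegment ideal. -/
def IsLexsegmentIdeal (I : Ideal (MvPolynomial (Fin n) K)) : Prop :=
  IsMonomialIdeal I ∧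
    ∀ u v : Fin n →₀ ℕ, (monomial u (1 : K)) ∈ I → mdeg v = mdeg u → lexLt u v →
      (monomial v (1 : K)) ∈ I

/-- The degree `j` piece of `S/I`, as the image of the degree `j` homogeneous polynomials. -/
noncomputable def Qpiece (I : Ideal (MvPolynomial (Fin n) K)) (j : ℕ) :
    Submodule K (MvPolynomial (Fin n) K ⧸ I) :=
  (homogeneousSubmodule (Fin n) K j).map (Ideal.Quotient.mkₐ K I).toLinearMap

/-- Multiplication by `g` maps `(S/I)_j` injectively (to `(S/I)_{j'}`). -/
def QInj (I : Ideal (MvPolynomial (Fin n) K)) (g : MvPolynomial (Fin n) K)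
    (j _j' : ℕ) : Prop :=
  ∀ f₁ ∈ Qpiece I j, ∀ f₂ ∈ Qpiece I j,
    Ideal.Quotient.mk I g * f₁ = Ideal.Quotient.mk I g * f₂ → f₁ = f₂

/-- Multiplication by `g` maps `(S/I)_j` onto `(S/I)_{j'}`. -/
def QSurj (I : Ideal (MvPolynomial (Fin n) K)) (g : MvPolynomial (Fin n) K)
    (j j' : ℕ) : Prop :=
  ∀ h ∈ Qpiece I j', ∃ f ∈ Qpiece I j, Ideal.Quotient.mk I g * f = h

/-- Multiplication by `g` from `(S/I)_j` to `(S/I)_{j'}` has maximal rank. -/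
def MulMaxRank (I : Ideal (MvPolynomial (Fin n) K)) (g : MvPolynomial (Fin n) K)
    (j j' : ℕ) : Prop :=
  QInj I g j j' ∨ QSurj I g j j'

namespace MvPolynomial

theorem mul_mem_of_forall_mul_monomial_mem {σ R : Type*} [CommSemiring R]
    {I : Ideal (MvPolynomial σ R)} {f g : MvPolynomial σ R}
    (h : ∀ m ∈ f.support, g * monomial m 1 ∈ I) : g * f ∈ I := by
  rw [f.as_sum, Finset.mul_sum]
  refine Ideal.sum_mem _ fun m hm => ?_
  rw [← mul_one (coeff m f), ← C_mul_monomial, mul_left_comm]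
  exact I.mul_mem_left _ (h m hm)

theorem IsHomogeneous.mem_idealOfVars {σ R : Type*} [CommSemiring R] {l : MvPolynomial σ R}
    {d : ℕ} (hl : l.IsHomogeneous d) (hd : d ≠ 0) : l ∈ idealOfVars σ R := by
  rw [← pow_one (idealOfVars σ R), mem_pow_idealOfVars_iff]
  intro m hm
  rw [Finsupp.degree_eq_weight_one]
  exact (Nat.one_le_iff_ne_zero.mpr hd).trans_eq (hl (mem_support_iff.mp hm)).symm

end MvPolynomial

section StableIdeal

variable {I : Ideal (MvPolynomial (Fin n) K)} {k : Fin n}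

theorem IsStableIdeal.X_mul_mem_of_X_mul_mem (hmon : IsMonomialIdeal I) (hst : IsStableIdeal I)
    (hk : ∀ k' : Fin n, k' ≤ k) {F : MvPolynomial (Fin n) K} (hF : X k * F ∈ I) (i : Fin n) :
    X i * F ∈ I := by
  refine mul_mem_of_forall_mul_monomial_mem fun m hm => ?_
  have hkm : monomial (Finsupp.single k 1 + m) (1 : K) ∈ I :=
    hmon _ hF _ (by rwa [mem_support_iff, coeff_X_mul, ← mem_support_iff])
  have hik := hst _ hkm k i (by simp) (fun k' hk' => absurd (hk k') (not_le.mpr hk')) (hk i)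
  rwa [add_assoc, add_tsub_cancel_left, add_comm, monomial_single_add, pow_one] at hik

theorem IsStableIdeal.idealOfVars_le_colon (hmon : IsMonomialIdeal I) (hst : IsStableIdeal I)
    (hk : ∀ k' : Fin n, k' ≤ k) {F : MvPolynomial (Fin n) K} (hF : X k * F ∈ I) :
    idealOfVars (Fin n) K ≤ I.colon {F} :=
  Ideal.span_le.mpr <| Set.range_subset_iff.mpr fun i =>
    Submodule.mem_colon_singleton.mpr (hst.X_mul_mem_of_X_mul_mem hmon hk hF i)

end StableIdeal

namespace LinearMap

variable {𝕜 V W : Type*} [DivisionRing 𝕜] [AddCommGroup V] [Module 𝕜 V] [AddCommGroup W]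
  [Module 𝕜 W] {f g : V →ₗ[𝕜] W}

theorem injective_of_ker_le (hker : ker f ≤ ker g) (hg : Function.Injective g) :
    Function.Injective f :=
  ker_eq_bot.mp (eq_bot_iff.mpr (hker.trans (ker_eq_bot.mpr hg).le))

theorem surjective_of_ker_le [FiniteDimensional 𝕜 V] (hker : ker f ≤ ker g)
    (hg : Function.Surjective g) : Function.Surjective f := by
  have : FiniteDimensional 𝕜 W := Module.Finite.of_surjective g hg
  have hrank_f := finrank_range_add_finrank_ker f
  have hrank_g := finrank_range_add_finrank_ker g
  have hker_le := Submodule.finrank_mono hker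
  rw [range_eq_top.mpr hg, finrank_top] at hrank_g
  rw [← range_eq_top]
  exact Submodule.eq_top_of_finrank_eq (le_antisymm (Submodule.finrank_le _) (by omega))

end LinearMap

section MulMap

variable (I : Ideal (MvPolynomial (Fin n) K)) {g : MvPolynomial (Fin n) K} {d : ℕ}

theorem mul_mem_Qpiece (hg : g.IsHomogeneous d) {j : ℕ} {x : MvPolynomial (Fin n) K ⧸ I}
    (hx : x ∈ Qpiece I j) : Ideal.Quotient.mk I g * x ∈ Qpiece I (j + d) := by
  obtain ⟨F, hF, rfl⟩ := hx
  exact ⟨g * F, add_comm d j ▸ hg.mul hF, by simp⟩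

noncomputable def Qpiece.mulMap (hg : g.IsHomogeneous d) (j : ℕ) :
    Qpiece I j →ₗ[K] Qpiece I (j + d) :=
  (LinearMap.mulLeft K (Ideal.Quotient.mk I g)).restrict fun _ => mul_mem_Qpiece I hg

variable {I}

theorem qInj_iff_injective (hg : g.IsHomogeneous d) {j j' : ℕ} :
    QInj I g j j' ↔ Function.Injective (Qpiece.mulMap I hg j) := by
  refine ⟨fun h x y hxy => Subtype.ext (h x x.2 y y.2 (congrArg Subtype.val hxy)),
    fun h x hx y hy hxy => congrArg Subtype.val (@h ⟨x, hx⟩ ⟨y, hy⟩ (Subtype.ext hxy))⟩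

theorem qSurj_iff_surjective (hg : g.IsHomogeneous d) {j : ℕ} :
    QSurj I g j (j + d) ↔ Function.Surjective (Qpiece.mulMap I hg j) := by
  refine ⟨fun h y => ?_, fun h y hy => ?_⟩
  · obtain ⟨x, hx, hxy⟩ := h y y.2
    exact ⟨⟨x, hx⟩, Subtype.ext hxy⟩
  · obtain ⟨x, hxy⟩ := h ⟨y, hy⟩
    exact ⟨x, x.2, congrArg Subtype.val hxy⟩

theorem mulMaxRank_iff (hg : g.IsHomogeneous d) {j : ℕ} :
    MulMaxRank I g j (j + d) ↔
      Function.Injective (Qpiece.mulMap I hg j) ∨ Function.Surjective (Qpiece.mulMap I hg j) :=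
  or_congr (qInj_iff_injective hg) (qSurj_iff_surjective hg)

theorem IsStableIdeal.ker_mulMap_X_le (hmon : IsMonomialIdeal I) (hst : IsStableIdeal I)
    {k : Fin n} (hk : ∀ k' : Fin n, k' ≤ k) (hg : g.IsHomogeneous d) (hd : d ≠ 0) (j : ℕ) :
    LinearMap.ker (Qpiece.mulMap I (isHomogeneous_X K k) j) ≤
      LinearMap.ker (Qpiece.mulMap I hg j) := by
  rintro ⟨_, F, -, rfl⟩
  intro hF
  rw [LinearMap.mem_ker, ← Subtype.val_inj] at hF ⊢
  change Ideal.Quotient.mk I (X k) * Ideal.Quotient.mk I F = 0 at hF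
  change Ideal.Quotient.mk I g * Ideal.Quotient.mk I F = 0
  rw [← map_mul, Ideal.Quotient.eq_zero_iff_mem] at hF ⊢
  exact Submodule.mem_colon_singleton.mp
    (hst.idealOfVars_le_colon hmon hk hF (hg.mem_idealOfVars hd))

end MulMap

theorem stmt_1 (hn : 1 ≤ n) (I : Ideal (MvPolynomial (Fin n) K))
    (hmon : IsMonomialIdeal I) (hst : IsStableIdeal I)
    (hfd : FiniteDimensional K (MvPolynomial (Fin n) K ⧸ I))
    (l : MvPolynomial (Fin n) K) (hl : l ∈ homogeneousSubmodule (Fin n) K 1)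
    (hwl : ∀ j : ℕ, MulMaxRank I l j (j + 1)) :
    ∀ j : ℕ, MulMaxRank I (X (⟨n - 1, by omega⟩ : Fin n)) j (j + 1) := by
  intro j
  have hlast : ∀ k : Fin n, k ≤ ⟨n - 1, by omega⟩ := fun k => Fin.mk_le_mk.mpr (by omega)
  have hker := hst.ker_mulMap_X_le hmon hlast (mem_homogeneousSubmodule 1 l |>.mp hl) one_ne_zero j
  rw [mulMaxRank_iff (isHomogeneous_X K _)]
  exact (mulMaxRank_iff _).mp (hwl j) |>.imp (LinearMap.injective_of_ker_le hker)
    (LinearMap.surjective_of_ker_le hker)
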